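/- For every natural number m ≥ 0 and every integer n ≥ 1, lim_{k→∞} ((n−1)!/k^{n−1}) · ∑_{ℓ=0}^{k} C(k−ℓ+n−1, n−1) · m^ℓ/ℓ! = e^m, where e^m = exp(m). -/

import Mathlib

/-!
Write the sum as `∑_ℓ c_k(ℓ) · m^ℓ/ℓ!` with `c_k(ℓ) = (n-1)! · C(k-ℓ+n-1, n-1) / k^(n-1)`. The
numerator of `c_k(ℓ)` is the rising factorial `(k-ℓ+1)⋯(k-ℓ+n-1)`, squeezed between
`(k-ℓ+1)^(n-1)` and `(k-ℓ+n-1)^(n-1)`; hence `c_k(ℓ) → 1` for each fixed `ℓ`, and `c_k(ℓ) ≤ n^(n-1)`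
uniformly. Tannery's theorem (dominated convergence for series) then gives the limit
`∑ m^ℓ/ℓ! = e^m`.
-/

open Filter Finset Topology Nat

lemma tendsto_sum_range_smul_of_tendsto_one {E : Type*} [NormedAddCommGroup E] [NormedSpace ℝ E]
    [CompleteSpace E] {c : ℕ → ℕ → ℝ} {a : ℕ → E} {C : ℝ} (ha : Summable (‖a ·‖))
    (hc : ∀ ℓ, Tendsto (c · ℓ) atTop (𝓝 1)) (hC : ∀ᶠ k in atTop, ∀ ℓ ≤ k, |c k ℓ| ≤ C) :
    Tendsto (fun k ↦ ∑ ℓ ∈ range (k + 1), c k ℓ • a ℓ) atTop (𝓝 (∑' ℓ, a ℓ)) := by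
  set f : ℕ → ℕ → E := fun k ℓ ↦ if ℓ ≤ k then c k ℓ • a ℓ else 0
  have hf : ∀ k, ∑' ℓ, f k ℓ = ∑ ℓ ∈ range (k + 1), c k ℓ • a ℓ := fun k ↦ by
    rw [tsum_eq_sum (s := range (k + 1)) fun ℓ hℓ ↦ if_neg (by simpa [Nat.lt_succ_iff] using hℓ)]
    exact sum_congr rfl fun ℓ hℓ ↦ if_pos (Nat.lt_succ_iff.mp (mem_range.mp hℓ))
  simp_rw [← hf]
  refine tendsto_tsum_of_dominated_convergence (ha.mul_left C) (fun ℓ ↦ ?_) ?_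
  · rw [← one_smul ℝ (a ℓ)]
    refine ((hc ℓ).smul_const (a ℓ)).congr' ?_
    filter_upwards [eventually_ge_atTop ℓ] with k hk
    simp [f, hk]
  · filter_upwards [hC] with k hk ℓ
    by_cases hℓ : ℓ ≤ k
    · simpa [f, hℓ, norm_smul] using mul_le_mul_of_nonneg_right (hk ℓ hℓ) (norm_nonneg (a ℓ))
    · have : 0 ≤ C := (abs_nonneg _).trans (hk 0 k.zero_le)
      simp only [f, if_neg hℓ, norm_zero]
      positivity

lemma pow_le_factorial_mul_choose_add (j d : ℕ) : (j + 1) ^ d ≤ d ! * (j + d).choose d :=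
  ascFactorial_eq_factorial_mul_choose j d ▸ pow_succ_le_ascFactorial (j + 1) d

lemma factorial_mul_choose_add_le_pow (j d : ℕ) : d ! * (j + d).choose d ≤ (j + d) ^ d :=
  ascFactorial_eq_factorial_mul_choose j d ▸ ascFactorial_le_pow_add j d

lemma tendsto_natCast_sub_add_div (ℓ c : ℕ) :
    Tendsto (fun k : ℕ ↦ ((k - ℓ + c : ℕ) : ℝ) / k) atTop (𝓝 1) := by
  have h := tendsto_add_mul_div_add_mul_atTop_nhds ((c : ℝ) - ℓ) 0 1 one_ne_zero
  rw [div_one] at h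
  refine h.congr' ?_
  filter_upwards [eventually_ge_atTop ℓ] with k hk
  push_cast [hk]
  ring

lemma tendsto_factorial_mul_choose_sub_add_div_pow (d ℓ : ℕ) :
    Tendsto (fun k : ℕ ↦ (d ! * (k - ℓ + d).choose d : ℝ) / (k : ℝ) ^ d) atTop (𝓝 1) := by
  have hlim (c : ℕ) : Tendsto (fun k : ℕ ↦ (((k - ℓ + c : ℕ) : ℝ) / k) ^ d) atTop (𝓝 1) := by
    simpa using (tendsto_natCast_sub_add_div ℓ c).pow d
  refine tendsto_of_tendsto_of_tendsto_of_le_of_le' (hlim 1) (hlim d)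
    (.of_forall fun k ↦ ?_) (.of_forall fun k ↦ ?_) <;> rw [div_pow] <;> gcongr
  · exact_mod_cast pow_le_factorial_mul_choose_add _ d
  · exact_mod_cast factorial_mul_choose_add_le_pow _ d

lemma factorial_mul_choose_sub_add_div_pow_le (d ℓ : ℕ) {k : ℕ} (hk : 1 ≤ k) :
    (d ! * (k - ℓ + d).choose d : ℝ) / (k : ℝ) ^ d ≤ (d + 1) ^ d := by
  have hk' : (0 : ℝ) < k := by exact_mod_cast hk
  rw [div_le_iff₀ (by positivity), ← mul_pow]
  calc (d ! * (k - ℓ + d).choose d : ℝ) ≤ ((k - ℓ + d : ℕ) : ℝ) ^ d := by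
        exact_mod_cast factorial_mul_choose_add_le_pow _ d
    _ ≤ ((d + 1) * k) ^ d := by
        gcongr
        have : k - ℓ + d ≤ (d + 1) * k := by nlinarith [Nat.sub_le k ℓ]
        exact_mod_cast this

/-- For every `m ≥ 0` and every `n ≥ 1`,
`lim_{k→∞} ((n−1)!/k^{n−1}) · ∑_{ℓ=0}^{k} C(k−ℓ+n−1, n−1) · m^ℓ/ℓ! = e^m`. -/
theorem tendsto_weighted_choose_sum_exp (m n : ℕ) (hn : 1 ≤ n) :
    Tendsto (fun k : ℕ =>
        (((n - 1).factorial : ℝ) / (k : ℝ) ^ (n - 1)) *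
          ∑ ℓ ∈ Finset.range (k + 1),
            ((k - ℓ + n - 1).choose (n - 1) : ℝ) * (m : ℝ) ^ ℓ / (ℓ.factorial : ℝ))
      atTop (nhds (Real.exp m)) := by
  obtain ⟨d, rfl⟩ : ∃ d, n = d + 1 := ⟨n - 1, by omega⟩
  have hexp : Real.exp m = ∑' ℓ : ℕ, (m : ℝ) ^ ℓ / ℓ ! := by
    rw [Real.exp_eq_exp_ℝ, NormedSpace.exp_eq_tsum_div]
  have hsummable : Summable fun ℓ : ℕ ↦ ‖(m : ℝ) ^ ℓ / (ℓ ! : ℝ)‖ := by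
    simpa only [Real.norm_eq_abs] using (Real.summable_pow_div_factorial m).abs
  have hbound : ∀ᶠ k in atTop, ∀ ℓ ≤ k,
      |(d ! * (k - ℓ + d).choose d : ℝ) / (k : ℝ) ^ d| ≤ (d + 1) ^ d := by
    filter_upwards [eventually_ge_atTop 1] with k hk ℓ _
    rw [abs_of_nonneg (by positivity)]
    exact factorial_mul_choose_sub_add_div_pow_le d ℓ hk
  rw [hexp]
  refine (tendsto_sum_range_smul_of_tendsto_one hsummable
    (tendsto_factorial_mul_choose_sub_add_div_pow d) hbound).congr fun k ↦ ?_
  simp only [Nat.add_sub_cancel, smul_eq_mul, mul_sum]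
  refine sum_congr rfl fun ℓ _ ↦ ?_
  rw [show k - ℓ + (d + 1) - 1 = k - ℓ + d by omega]
  ring
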